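/- The number of distinct main eigenvalues of a graph G equals the largest k such that the vectors j, A(G)j, A(G)²j, …, A(G)^{k−1}j are linearly independent. -/

import Mathlib

/-!
A linear relation among `j, Aj, …, A^{k-1}j` is a polynomial `p` of degree `< k` with
`p(A) j = 0`. For symmetric `A`, `p(A) j = 0` iff `p` vanishes at every main eigenvalue: expanding
`j` in an orthonormal eigenbasis `bᵢ` gives `p(A) j = ∑ p(λᵢ) (bᵢ ⬝ j) bᵢ`, and conversely
`p(μ) (v ⬝ j) = v ⬝ p(A) j` for an eigenvector `v`, as `p(A)` is symmetric. Finally, a nonzero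
polynomial of degree `< k` vanishing at `m` given points exists iff `k > m`.
-/

open Matrix

/-- `μ` is a main eigenvalue of the matrix `A`. -/
def Matrix.IsMainEig {n : ℕ} (A : Matrix (Fin n) (Fin n) ℝ) (μ : ℝ) : Prop :=
  ∃ v : Fin n → ℝ, A *ᵥ v = μ • v ∧ v ⬝ᵥ (fun _ => (1 : ℝ)) ≠ 0

open Polynomial

namespace Polynomial

variable {R : Type*} [CommRing R] [IsDomain R]

theorem le_card_iff_forall_degree_lt_eval_eq_zero (s : Finset R) (k : ℕ) :
    k ≤ s.card ↔ ∀ p : R[X], p.degree < k → (∀ x ∈ s, p.eval x = 0) → p = 0 := by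
  refine ⟨fun hk p hp hs => eq_zero_of_degree_lt_of_eval_finset_eq_zero s
    (hp.trans_le (by exact_mod_cast hk)) hs, fun h => ?_⟩
  by_contra! hk
  refine Lagrange.nodal_ne_zero (s := s) (v := id)
    (h _ ?_ fun x hx => Lagrange.eval_nodal_at_node (v := id) hx)
  rw [Lagrange.degree_nodal]
  exact_mod_cast hk

end Polynomial

namespace Matrix

variable {ι R : Type*} [Fintype ι] [DecidableEq ι]

theorem isSymm_aeval [CommSemiring R] {A : Matrix ι ι R} (hA : A.IsSymm) (p : R[X]) :
    (aeval A p).IsSymm := by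
  induction p using Polynomial.induction_on' with
  | add p q hp hq => simpa using hp.add hq
  | monomial n a => simpa [aeval_monomial, ← Algebra.smul_def] using (hA.pow n).smul a

theorem aeval_mulVec_of_mulVec_eq_smul [CommRing R] {A : Matrix ι ι R} {v : ι → R} {μ : R}
    (hv : A *ᵥ v = μ • v) (p : R[X]) : aeval A p *ᵥ v = p.eval μ • v := by
  have := Module.End.aeval_apply_of_mem_apply_eq_smul (f := toLinAlgEquiv' A) (p := p)
    (by simpa using hv)
  rwa [aeval_algHom_apply, toLinAlgEquiv'_apply] at this

theorem linearIndependent_pow_mulVec_iff [CommRing R] (A : Matrix ι ι R) (w : ι → R) (k : ℕ) :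
    LinearIndependent R (fun i : Fin k => A ^ (i : ℕ) *ᵥ w) ↔
      ∀ p : R[X], p.degree < k → aeval A p *ᵥ w = 0 → p = 0 := by
  have hcomb (g : Fin k → R) :
      ∑ i, g i • (A ^ (i : ℕ) *ᵥ w) = aeval A ((degreeLTEquiv R k).symm g : R[X]) *ᵥ w := by
    simp [degreeLTEquiv, sum_mulVec, aeval_monomial, ← Algebra.smul_def, smul_mulVec]
  rw [Fintype.linearIndependent_iff]
  constructor
  · intro h p hp hpw
    have := h (degreeLTEquiv R k ⟨p, mem_degreeLT.2 hp⟩) (by simpa [hcomb] using hpw)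
    rwa [← funext_iff, ← Pi.zero_def, degreeLTEquiv_eq_zero_iff_eq_zero] at this
  · intro h g hg
    have : g = 0 := by
      simpa using h _ (mem_degreeLT.1 ((degreeLTEquiv R k).symm g).2) (hcomb g ▸ hg)
    simp [this]

theorem IsSymm.eval_eq_zero_of_aeval_mulVec_eq_zero [CommRing R] [NoZeroDivisors R]
    {A : Matrix ι ι R} (hA : A.IsSymm) {p : R[X]} {w v : ι → R} {μ : R}
    (hp : aeval A p *ᵥ w = 0) (hv : A *ᵥ v = μ • v) (hvw : v ⬝ᵥ w ≠ 0) : p.eval μ = 0 := by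
  have : p.eval μ * (v ⬝ᵥ w) = 0 :=
    calc p.eval μ * (v ⬝ᵥ w) = (aeval A p *ᵥ v) ⬝ᵥ w := by
          rw [aeval_mulVec_of_mulVec_eq_smul hv, smul_dotProduct, smul_eq_mul]
      _ = v ⬝ᵥ (aeval A p *ᵥ w) := by
          rw [dotProduct_mulVec, ← mulVec_transpose, (isSymm_aeval hA p).eq]
      _ = 0 := by rw [hp, dotProduct_zero]
  exact (mul_eq_zero.1 this).resolve_right hvw

theorem IsSymm.aeval_mulVec_eq_zero_iff {A : Matrix ι ι ℝ} (hA : A.IsSymm) (w : ι → ℝ)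
    (p : ℝ[X]) : aeval A p *ᵥ w = 0 ↔
      ∀ μ, (∃ v, A *ᵥ v = μ • v ∧ v ⬝ᵥ w ≠ 0) → p.eval μ = 0 := by
  refine ⟨fun hp μ ⟨v, hv, hvw⟩ => hA.eval_eq_zero_of_aeval_mulVec_eq_zero hp hv hvw,
    fun h => ?_⟩
  have hHerm : A.IsHermitian := isHermitian_iff_isSymm.2 hA
  let b := hHerm.eigenvectorBasis
  have hw : ∑ i, (⇑(b i) ⬝ᵥ w) • ⇑(b i) = w := by
    simpa [EuclideanSpace.inner_eq_star_dotProduct, dotProduct_comm] using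
      congrArg WithLp.ofLp (b.sum_repr' (WithLp.toLp 2 w))
  rw [← hw, mulVec_sum]
  refine Finset.sum_eq_zero fun i _ => ?_
  have hb : A *ᵥ ⇑(b i) = _ := hHerm.mulVec_eigenvectorBasis i
  by_cases hbw : ⇑(b i) ⬝ᵥ w = 0
  · simp [hbw]
  · rw [mulVec_smul, aeval_mulVec_of_mulVec_eq_smul hb, h _ ⟨_, hb, hbw⟩, zero_smul, smul_zero]

end Matrix

/-- The number of distinct main eigenvalues of `G` is the largest `k` such that
`j, A(G)j, A(G)²j, …, A(G)^{k-1}j` are linearly independent. -/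
theorem card_mainEig_eq_greatest_linearIndependent {n : ℕ} (G : SimpleGraph (Fin n))
    [DecidableRel G.Adj] (A : Matrix (Fin n) (Fin n) ℝ) (hA : A = G.adjMatrix ℝ)
    (s : ℕ) (hs : s = {μ : ℝ | A.IsMainEig μ}.ncard) :
    IsGreatest {k : ℕ | LinearIndependent ℝ
      (fun i : Fin k => (A ^ (i : ℕ)) *ᵥ fun _ => (1 : ℝ))} s := by
  have hsymm : A.IsSymm := hA ▸ G.isSymm_adjMatrix
  -- Cayley–Hamilton: `A.charpoly` kills `j`, so it vanishes at every main eigenvalue.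
  have hroots : {μ | A.IsMainEig μ} ⊆ ↑A.charpoly.roots.toFinset := fun μ hμ => by
    have := (hsymm.aeval_mulVec_eq_zero_iff _ A.charpoly).1
      (by rw [aeval_self_charpoly, zero_mulVec]) μ hμ
    simpa [A.charpoly_monic.ne_zero] using this
  have hfin := (Finset.finite_toSet _).subset hroots
  have hindep_iff (k : ℕ) :
      LinearIndependent ℝ (fun i : Fin k => A ^ (i : ℕ) *ᵥ fun _ => (1 : ℝ)) ↔ k ≤ s := by
    rw [hs, Set.ncard_eq_toFinset_card _ hfin, le_card_iff_forall_degree_lt_eval_eq_zero,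
      linearIndependent_pow_mulVec_iff]
    simp only [hsymm.aeval_mulVec_eq_zero_iff, Set.Finite.mem_toFinset, Set.mem_ofPred_eq,
      IsMainEig]
  exact ⟨(hindep_iff s).2 le_rfl, fun k hk => (hindep_iff k).1 hk⟩
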